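/- Let n ≥ 2 and define U(x) = (n+1)²·x_n^{1/(n+1)} − x_n^{2−1/(n+1)} for 0 < x_n ≤ 1. Then U > 0, and U·(1+|∇U|²)·F[U] = U·U_{nn} + n·(1+U_n²) ≤ −6n² + 3n + 2 < 0, so U is a supersolution of the hyperbolic minimal graph equation on the slab {x ∈ ℝⁿ : 0 < x_n ≤ 1}. -/

import Mathlib

/-- First partial derivative of `u` in the `i`-th coordinate direction. -/
noncomputable def pd {n : ℕ} (u : EuclideanSpace ℝ (Fin n) → ℝ) (i : Fin n)
    (x : EuclideanSpace ℝ (Fin n)) : ℝ :=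
  fderiv ℝ u x (EuclideanSpace.single i 1)

/-- Second partial derivative `u_{ij}`. -/
noncomputable def pd2 {n : ℕ} (u : EuclideanSpace ℝ (Fin n) → ℝ) (i j : Fin n)
    (x : EuclideanSpace ℝ (Fin n)) : ℝ :=
  fderiv ℝ (fun y => fderiv ℝ u y (EuclideanSpace.single j 1)) x (EuclideanSpace.single i 1)

/-- The hyperbolic minimal graph operator
`F[u] = Δu − Σ_{i,j} u_i u_j u_{ij}/(1+|∇u|²) + n/u`. -/
noncomputable def FHMG {n : ℕ} (u : EuclideanSpace ℝ (Fin n) → ℝ)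
    (x : EuclideanSpace ℝ (Fin n)) : ℝ :=
  (∑ i, pd2 u i i x)
    - (∑ i, ∑ j, pd u i x * pd u j x * pd2 u i j x) / (1 + ∑ i, (pd u i x) ^ 2)
    + n / u x

lemma slab_Uderiv1 {n : ℕ} (hn : 2 ≤ n) (U : ℝ → ℝ)
    (hU : ∀ t : ℝ, U t = ((n : ℝ) + 1) ^ 2 * t ^ ((1 : ℝ) / (n + 1)) - t ^ (2 - (1 : ℝ) / (n + 1)))
    {s : ℝ} (hs : 0 < s) :
    HasDerivAt U (((n : ℝ) + 1) * s ^ ((1:ℝ)/(n+1) - 1)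
      - (2 - (1:ℝ)/(n+1)) * s ^ (1 - (1:ℝ)/(n+1))) s := by
  have hn1 : (0:ℝ) < (n:ℝ) + 1 := by positivity
  have h1 := (Real.hasDerivAt_rpow_const (x := s) (p := (1:ℝ)/(n+1))
    (Or.inl hs.ne')).const_mul (((n:ℝ)+1)^2)
  have h2 := Real.hasDerivAt_rpow_const (x := s) (p := 2 - (1:ℝ)/(n+1)) (Or.inl hs.ne')
  have h3 := h1.sub h2
  have hfun : (fun t : ℝ => ((n : ℝ) + 1) ^ 2 * t ^ ((1 : ℝ) / (n + 1))
      - t ^ (2 - (1 : ℝ) / (n + 1))) = U := by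
    funext t; rw [hU t]
  simp only [Pi.sub_def] at h3
  rw [hfun] at h3
  refine h3.congr_deriv ?_
  rw [show (2 - (1:ℝ)/(n+1)) - 1 = 1 - (1:ℝ)/(n+1) by ring]
  field_simp

lemma slab_Uderiv2 {n : ℕ} {s : ℝ} (hs : 0 < s) :
    HasDerivAt (fun t : ℝ => ((n : ℝ) + 1) * t ^ ((1:ℝ)/(n+1) - 1)
      - (2 - (1:ℝ)/(n+1)) * t ^ (1 - (1:ℝ)/(n+1)))
      (((n:ℝ)+1) * ((1:ℝ)/(n+1) - 1) * s ^ ((1:ℝ)/(n+1) - 2)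
        - (2 - (1:ℝ)/(n+1)) * (1 - (1:ℝ)/(n+1)) * s ^ (-((1:ℝ)/(n+1)))) s := by
  have h1 := (Real.hasDerivAt_rpow_const (x := s) (p := (1:ℝ)/(n+1) - 1)
    (Or.inl hs.ne')).const_mul ((n:ℝ)+1)
  have h2 := (Real.hasDerivAt_rpow_const (x := s) (p := 1 - (1:ℝ)/(n+1))
    (Or.inl hs.ne')).const_mul (2 - (1:ℝ)/(n+1))
  have h3 := h1.sub h2
  simp only [Pi.sub_def] at h3
  refine h3.congr_deriv ?_
  rw [show ((1:ℝ)/(n+1) - 1) - 1 = (1:ℝ)/(n+1) - 2 by ring,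
    show (1 - (1:ℝ)/(n+1)) - 1 = -((1:ℝ)/(n+1)) by ring]
  ring

lemma slab_key_alg {n : ℕ} {t : ℝ} (ht : 0 < t) :
    (((n:ℝ)+1)^2 * t^((1:ℝ)/(n+1)) - t^(2-(1:ℝ)/(n+1)))
      * (((n:ℝ)+1)*((1:ℝ)/(n+1)-1)*t^((1:ℝ)/(n+1)-2)
         - (2-(1:ℝ)/(n+1))*(1-(1:ℝ)/(n+1))*t^(-((1:ℝ)/(n+1))))
    + (n:ℝ)*(1 + (((n:ℝ)+1)*t^((1:ℝ)/(n+1)-1) - (2-(1:ℝ)/(n+1))*t^(1-(1:ℝ)/(n+1)))^2)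
    = -6*(n:ℝ)^2 - (n:ℝ)
      + (2*(n:ℝ)*(2*(n:ℝ)+1)/((n:ℝ)+1)) * t^(2 - (1:ℝ)/(n+1) - (1:ℝ)/(n+1)) := by
  have hn1 : (0:ℝ) < (n:ℝ) + 1 := by positivity
  set a : ℝ := (1:ℝ)/(n+1) with ha
  have hP : (0:ℝ) < t ^ a := Real.rpow_pos_of_pos ht a
  have h2 : t ^ (2:ℝ) = t ^ 2 := by
    rw [show (2:ℝ) = ((2:ℕ):ℝ) by norm_num, Real.rpow_natCast]
  have e1 : t ^ (a - 1) = t ^ a / t := by rw [Real.rpow_sub ht, Real.rpow_one]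
  have e2 : t ^ (1 - a) = t / t ^ a := by rw [Real.rpow_sub ht, Real.rpow_one]
  have e3 : t ^ (a - 2) = t ^ a / t ^ 2 := by rw [Real.rpow_sub ht, h2]
  have e4 : t ^ (-a) = 1 / t ^ a := by rw [Real.rpow_neg ht.le, one_div]
  have e5 : t ^ (2 - a) = t ^ 2 / t ^ a := by rw [Real.rpow_sub ht, h2]
  have e6 : t ^ (2 - a - a) = t ^ 2 / t ^ a / t ^ a := by
    rw [Real.rpow_sub ht, Real.rpow_sub ht, h2]
  rw [e1, e2, e3, e4, e5, e6, ha]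
  have hna : ((n:ℝ)+1) ≠ 0 := hn1.ne'
  field_simp
  ring

lemma slab_div_alg (c A B S : ℝ) (hA : A ≠ 0) (hS : 1 + S ≠ 0) :
    A * (1 + S) * (B - S * B / (1 + S) + c / A) = A * B + c * (1 + S) := by
  field_simp
  ring

lemma slab_Vfd {n : ℕ} (k : Fin n) (U : ℝ → ℝ) (V : EuclideanSpace ℝ (Fin n) → ℝ)
    (hVU : ∀ y : EuclideanSpace ℝ (Fin n), V y = U (y k))
    (hd : ∀ s : ℝ, 0 < s → HasDerivAt U (deriv U s) s)
    {y : EuclideanSpace ℝ (Fin n)} (hy : 0 < y k) :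
    HasFDerivAt V ((deriv U (y k)) •
      (EuclideanSpace.proj k : EuclideanSpace ℝ (Fin n) →L[ℝ] ℝ)) y := by
  have h3 := (hd (y k) hy).comp_hasFDerivAt y
    ((EuclideanSpace.proj (𝕜 := ℝ) k).hasFDerivAt (x := y))
  have : U ∘ ⇑(EuclideanSpace.proj (𝕜 := ℝ) k) = V := by
    funext z; simp [Function.comp, hVU z]
  rwa [this] at h3

lemma slab_pdV {n : ℕ} (k : Fin n) (U : ℝ → ℝ) (V : EuclideanSpace ℝ (Fin n) → ℝ)
    (hVU : ∀ y : EuclideanSpace ℝ (Fin n), V y = U (y k))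
    (hd : ∀ s : ℝ, 0 < s → HasDerivAt U (deriv U s) s)
    {x : EuclideanSpace ℝ (Fin n)} (hx : 0 < x k) (i : Fin n) :
    pd V i x = if k = i then deriv U (x k) else 0 := by
  rw [pd, (slab_Vfd k U V hVU hd hx).fderiv]
  by_cases h : k = i <;> simp [h, EuclideanSpace.single_apply]

lemma slab_pd2V {n : ℕ} (k : Fin n) (U : ℝ → ℝ) (V : EuclideanSpace ℝ (Fin n) → ℝ)
    (hVU : ∀ y : EuclideanSpace ℝ (Fin n), V y = U (y k))
    (hd : ∀ s : ℝ, 0 < s → HasDerivAt U (deriv U s) s)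
    (hd2 : ∀ s : ℝ, 0 < s → HasDerivAt (deriv U) (deriv (deriv U) s) s)
    {x : EuclideanSpace ℝ (Fin n)} (hx : 0 < x k) (i j : Fin n) :
    pd2 V i j x = if k = i ∧ k = j then deriv (deriv U) (x k) else 0 := by
  have hcont : Continuous fun y : EuclideanSpace ℝ (Fin n) => y k :=
    (EuclideanSpace.proj (𝕜 := ℝ) k).continuous
  have hmem : {y : EuclideanSpace ℝ (Fin n) | 0 < y k} ∈ nhds x :=
    (isOpen_lt continuous_const hcont).mem_nhds hx
  have hev : (fun y => fderiv ℝ V y (EuclideanSpace.single j 1))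
      =ᶠ[nhds x] (fun y => if k = j then deriv U (y k) else 0) := by
    filter_upwards [hmem] with y hy
    rw [(slab_Vfd k U V hVU hd hy).fderiv]
    by_cases h : k = j <;> simp [h, EuclideanSpace.single_apply]
  rw [pd2, hev.fderiv_eq]
  by_cases hj : k = j
  · simp only [if_pos hj]
    have h4 : HasFDerivAt (fun y : EuclideanSpace ℝ (Fin n) => deriv U (y k))
        ((deriv (deriv U) (x k)) •
          (EuclideanSpace.proj k : EuclideanSpace ℝ (Fin n) →L[ℝ] ℝ)) x :=
      by have h := (hd2 (x k) hx).comp_hasFDerivAt x ((EuclideanSpace.proj (𝕜 := ℝ) k).hasFDerivAt (x := x)); exact h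
    rw [h4.fderiv]
    by_cases hi : k = i
    · simp [hi, hj, EuclideanSpace.single_apply, hi.symm.trans hj]
    · simp [hi, hj, EuclideanSpace.single_apply]
  · simp only [if_neg hj]
    rw [fderiv_const_apply]
    simp [hj]

set_option maxHeartbeats 2000000 in
theorem slab_supersolution
    {n : ℕ} (hn : 2 ≤ n)
    (U : ℝ → ℝ)
    (hU : ∀ t : ℝ, U t = ((n : ℝ) + 1) ^ 2 * t ^ ((1 : ℝ) / (n + 1)) - t ^ (2 - (1 : ℝ) / (n + 1)))
    (V : EuclideanSpace ℝ (Fin n) → ℝ)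
    (hV : ∀ x : EuclideanSpace ℝ (Fin n), V x = U (x ⟨n - 1, by omega⟩)) :
    ∀ x : EuclideanSpace ℝ (Fin n),
      0 < x ⟨n - 1, by omega⟩ → x ⟨n - 1, by omega⟩ ≤ 1 →
      0 < U (x ⟨n - 1, by omega⟩) ∧
      V x * (1 + ∑ i, (pd V i x) ^ 2) * FHMG V x
        = U (x ⟨n - 1, by omega⟩) * deriv (deriv U) (x ⟨n - 1, by omega⟩)
            + (n : ℝ) * (1 + (deriv U (x ⟨n - 1, by omega⟩)) ^ 2) ∧
      U (x ⟨n - 1, by omega⟩) * deriv (deriv U) (x ⟨n - 1, by omega⟩)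
            + (n : ℝ) * (1 + (deriv U (x ⟨n - 1, by omega⟩)) ^ 2)
          ≤ -6 * (n : ℝ) ^ 2 + 3 * n + 2 ∧
      (-6 * (n : ℝ) ^ 2 + 3 * n + 2 : ℝ) < 0 := by
  intro x hx0 hx1
  have hn1 : (0:ℝ) < (n:ℝ) + 1 := by positivity
  have hn2 : (2:ℝ) ≤ (n:ℝ) := by exact_mod_cast hn
  set k : Fin n := ⟨n - 1, by omega⟩ with hk
  set t : ℝ := x k with htdef
  clear_value t k
  have ht : 0 < t := hx0
  have ht1 : t ≤ 1 := hx1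
  have hVU : ∀ y : EuclideanSpace ℝ (Fin n), V y = U (y k) := fun y => hV y
  -- derivative facts
  have hd : ∀ s : ℝ, 0 < s → HasDerivAt U (deriv U s) s := by
    intro s hs
    have h := slab_Uderiv1 hn U hU hs
    rw [h.deriv]; exact h
  have hdU : ∀ s : ℝ, 0 < s → deriv U s
      = ((n:ℝ)+1) * s ^ ((1:ℝ)/(n+1) - 1) - (2 - (1:ℝ)/(n+1)) * s ^ (1 - (1:ℝ)/(n+1)) :=
    fun s hs => (slab_Uderiv1 hn U hU hs).deriv
  have hd2full : ∀ s : ℝ, 0 < s → HasDerivAt (deriv U)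
      (((n:ℝ)+1) * ((1:ℝ)/(n+1) - 1) * s ^ ((1:ℝ)/(n+1) - 2)
        - (2 - (1:ℝ)/(n+1)) * (1 - (1:ℝ)/(n+1)) * s ^ (-((1:ℝ)/(n+1)))) s := by
    intro s hs
    have hev : deriv U =ᶠ[nhds s] (fun r : ℝ => ((n:ℝ)+1) * r ^ ((1:ℝ)/(n+1) - 1)
        - (2 - (1:ℝ)/(n+1)) * r ^ (1 - (1:ℝ)/(n+1))) := by
      filter_upwards [eventually_gt_nhds hs] with r hr using (slab_Uderiv1 hn U hU hr).deriv
    exact (slab_Uderiv2 (n := n) hs).congr_of_eventuallyEq hev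
  have hd2 : ∀ s : ℝ, 0 < s → HasDerivAt (deriv U) (deriv (deriv U) s) s := by
    intro s hs
    have h := hd2full s hs
    rw [h.deriv]; exact h
  have hdd : deriv (deriv U) t
      = ((n:ℝ)+1) * ((1:ℝ)/(n+1) - 1) * t ^ ((1:ℝ)/(n+1) - 2)
        - (2 - (1:ℝ)/(n+1)) * (1 - (1:ℝ)/(n+1)) * t ^ (-((1:ℝ)/(n+1))) :=
    (hd2full t ht).deriv
  -- positivity of U
  have ha1 : (1:ℝ)/((n:ℝ)+1) ≤ 1 := by
    rw [div_le_one hn1]; linarith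
  have hPpos : 0 < t ^ ((1:ℝ)/(n+1)) := Real.rpow_pos_of_pos ht _
  have h5 : t ^ (2 - (1:ℝ)/(n+1)) ≤ t ^ ((1:ℝ)/(n+1)) :=
    Real.rpow_le_rpow_of_exponent_ge ht ht1 (by linarith)
  have hUpos : 0 < U t := by
    rw [hU t]
    have h6 : (0:ℝ) < (((n:ℝ)+1)^2 - 1) * t ^ ((1:ℝ)/(n+1)) :=
      mul_pos (by nlinarith) hPpos
    nlinarith [h5, h6]
  -- key identity value
  have hkey := slab_key_alg (n := n) ht
  have hQ : t ^ (2 - (1:ℝ)/(n+1) - (1:ℝ)/(n+1)) ≤ 1 :=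
    Real.rpow_le_one ht.le ht1 (by linarith)
  have hC : 0 ≤ 2*(n:ℝ)*(2*(n:ℝ)+1)/((n:ℝ)+1) := by positivity
  have hCle : 2*(n:ℝ)*(2*(n:ℝ)+1)/((n:ℝ)+1) ≤ 4*(n:ℝ)+2 := by
    rw [div_le_iff₀ hn1]; nlinarith
  -- inequality part
  have hineq : U t * deriv (deriv U) t + (n:ℝ) * (1 + (deriv U t)^2)
      ≤ -6 * (n:ℝ)^2 + 3*(n:ℝ) + 2 := by
    rw [hU t, hdd, hdU t ht]
    have hCQ := mul_le_of_le_one_right hC hQ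
    linarith [hkey, hCQ, hCle]
  -- PDE identity part
  have htx : 0 < x k := by rw [← htdef]; exact ht
  have hpd : ∀ i, pd V i x = if k = i then deriv U t else 0 := by
    simp only [htdef]; exact slab_pdV k U V hVU hd htx
  have hpd2 : ∀ i j, pd2 V i j x = if k = i ∧ k = j then deriv (deriv U) t else 0 := by
    simp only [htdef]; exact slab_pd2V k U V hVU hd hd2 htx
  have hs2 : ∑ i, (pd V i x)^2 = (deriv U t)^2 := by
    simp only [hpd, apply_ite (fun z : ℝ => z^2)]
    simp [Finset.sum_ite_eq]
  have hs1 : ∑ i, pd2 V i i x = deriv (deriv U) t := by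
    simp only [hpd2, and_self]
    simp [Finset.sum_ite_eq]
  have hs3 : ∑ i, ∑ j, pd V i x * pd V j x * pd2 V i j x
      = (deriv U t)^2 * deriv (deriv U) t := by
    simp only [hpd, hpd2]
    simp [Finset.sum_ite_eq, ite_and, mul_ite, ite_mul, mul_zero, zero_mul, pow_two]
  have hVx : V x = U t := by rw [hV x, ← htdef]
  have h1S : (0:ℝ) < 1 + (deriv U t)^2 := by positivity
  have heq : V x * (1 + ∑ i, (pd V i x)^2) * FHMG V x
      = U t * deriv (deriv U) t + (n:ℝ) * (1 + (deriv U t)^2) := by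
    rw [FHMG, hs1, hs2, hs3, hVx]
    exact slab_div_alg (n:ℝ) (U t) (deriv (deriv U) t) ((deriv U t)^2) hUpos.ne' h1S.ne'
  have hneg : (-6 * (n:ℝ)^2 + 3*(n:ℝ) + 2 : ℝ) < 0 := by nlinarith
  exact ⟨hUpos, heq, hineq, hneg⟩
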